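/- Let W_m, W_s > 0, let β₀, n₁, n₀, β_mx, β_my, σ_m, σ_s, β_sy ∈ ℝ with β_mx ≠ 0, β_my ≠ 0, σ_m > 0, and σ_s² + β_my² ≠ 0. Define E_m : ℝ → ℝ by E_m(y) = cos(β_my y) for |y| ≤ W_m/2 and E_m(y) = cos(β_my W_m/2) e^{-σ_m(|y| - W_m/2)} for |y| > W_m/2, and define E_u : ℝ → ℝ by E_u(y) = cos(β_sy W_s/2) e^{-σ_s(W_m/2 - y)}. Then the coupling coefficient κ_m := (β₀² (n₁² - n₀²) / (2 β_mx)) · (∫_{-W_m/2}^{W_m/2} E_m(y) E_u(y) dy) / (∫_{-∞}^{∞} E_m(y)² dy) satisfies κ_m = (β₀² (n₁² - n₀²) / (2 β_mx)) · e^{-σ_s W_m/2} cos(β_sy W_s/2) · ( 2 σ_s cos(β_my W_m/2) sinh(σ_s W_m/2) + 2 β_my sin(β_my W_m/2) cosh(σ_s W_m/2) ) / ( (σ_s² + β_my²) · ( W_m/2 + sin(β_my W_m)/(2 β_my) + cos²(β_my W_m/2)/σ_m ) ). -/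

import Mathlib

/-!
On the core both fields are explicit, so the overlap integral is the elementary
integral of `cos (β_my y) · exp (σ_s y)`, with antiderivative
`exp (σ y) (σ cos (b y) + b sin (b y)) / (σ² + b²)`; over the symmetric core this yields the
`sinh`/`cosh` combination. The mode profile is even, so its squared norm is twice the integral
over `(0, ∞)`, which splits into the core part `∫ cos²` and an exponential cladding tail of mass
`cos² (β_my W_m/2) / (2 σ_m)`.
-/

open MeasureTheory Set Real

lemma integral_cos_mul_exp {b σ : ℝ} (h : σ ^ 2 + b ^ 2 ≠ 0) (c d : ℝ) :
    ∫ y in c..d, cos (b * y) * exp (σ * y) =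
      (exp (σ * d) * (σ * cos (b * d) + b * sin (b * d)) -
        exp (σ * c) * (σ * cos (b * c) + b * sin (b * c))) / (σ ^ 2 + b ^ 2) := by
  have hderiv : ∀ y ∈ uIcc c d, HasDerivAt
      (fun y => exp (σ * y) * (σ * cos (b * y) + b * sin (b * y)) / (σ ^ 2 + b ^ 2))
      (cos (b * y) * exp (σ * y)) y := by
    intro y _
    have hby := (hasDerivAt_id' y).const_mul b
    have hσy := (hasDerivAt_id' y).const_mul σ
    refine ((hσy.exp.mul ((hby.cos.const_mul σ).add (hby.sin.const_mul b))).div_const _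
      ).congr_deriv ?_
    simp only [Pi.add_apply]
    field_simp
    ring
  have hcont : Continuous fun y => cos (b * y) * exp (σ * y) := by fun_prop
  rw [intervalIntegral.integral_eq_sub_of_hasDerivAt hderiv (hcont.intervalIntegrable c d),
    sub_div]

lemma integral_cos_mul_exp_symm {b σ : ℝ} (h : σ ^ 2 + b ^ 2 ≠ 0) (a : ℝ) :
    ∫ y in (-a)..a, cos (b * y) * exp (σ * y) =
      (2 * σ * cos (b * a) * sinh (σ * a) + 2 * b * sin (b * a) * cosh (σ * a)) /
        (σ ^ 2 + b ^ 2) := by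
  rw [integral_cos_mul_exp h, sinh_eq, cosh_eq]
  simp only [mul_neg, cos_neg, sin_neg]
  ring

lemma integral_cos_const_mul_sq {b : ℝ} (hb : b ≠ 0) (a : ℝ) :
    ∫ t in (0 : ℝ)..a, cos (b * t) ^ 2 = a / 2 + sin (2 * b * a) / (4 * b) := by
  rw [intervalIntegral.integral_comp_mul_left (fun x => cos x ^ 2) hb, integral_cos_sq,
    mul_assoc, sin_two_mul]
  simp only [mul_zero, cos_zero, sin_zero, smul_eq_mul]
  field_simp
  ring

lemma integrableOn_exp_neg_mul_sub_Ioi {σ : ℝ} (hσ : 0 < σ) (a : ℝ) :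
    IntegrableOn (fun t => exp (-σ * (t - a))) (Ioi a) := by
  have h := (integrableOn_exp_mul_Ioi (neg_lt_zero.2 hσ) a).const_mul (exp (σ * a))
  refine IntegrableOn.congr_fun h (fun t _ => ?_) measurableSet_Ioi
  rw [← exp_add]
  ring_nf

lemma integral_exp_neg_mul_sub_Ioi {σ : ℝ} (hσ : 0 < σ) (a : ℝ) :
    ∫ t in Ioi a, exp (-σ * (t - a)) = 1 / σ := by
  have h : ∀ t, exp (-σ * (t - a)) = exp (σ * a) * exp (-σ * t) := fun t => by
    rw [← exp_add]
    ring_nf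
  simp_rw [h]
  rw [integral_const_mul, integral_exp_mul_Ioi (neg_lt_zero.2 hσ) a, neg_div_neg_eq,
    mul_div_assoc', ← exp_add, show σ * a + -σ * a = 0 by ring, exp_zero]

structure IsSlabModeProfile (f : ℝ → ℝ) (a b σ : ℝ) : Prop where
  core : ∀ y, |y| ≤ a → f y = cos (b * y)
  clad : ∀ y, a < |y| → f y = cos (b * a) * exp (-σ * (|y| - a))

namespace IsSlabModeProfile

variable {f : ℝ → ℝ} {a b σ : ℝ}

lemma comp_abs (hf : IsSlabModeProfile f a b σ) (y : ℝ) : f |y| = f y := by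
  rcases le_or_gt |y| a with h | h
  · rw [hf.core _ (by rwa [abs_abs]), hf.core y h]
    rcases abs_choice y with hy | hy <;> rw [hy]
    rw [mul_neg, cos_neg]
  · rw [hf.clad _ (by rwa [abs_abs]), hf.clad y h, abs_abs]

lemma sq_eqOn_Ioi (hf : IsSlabModeProfile f a b σ) (ha : 0 ≤ a) :
    EqOn (fun t => f t ^ 2) (fun t => cos (b * a) ^ 2 * exp (-(2 * σ) * (t - a))) (Ioi a) := by
  intro t ht
  have habs : |t| = t := abs_of_pos (ha.trans_lt ht)
  simp only
  rw [hf.clad t (by rwa [habs]), habs, mul_pow, sq (exp _), ← exp_add]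
  ring_nf

lemma integral_sq (hf : IsSlabModeProfile f a b σ) (ha : 0 ≤ a) (hb : b ≠ 0) (hσ : 0 < σ) :
    ∫ y, f y ^ 2 = a + sin (2 * b * a) / (2 * b) + cos (b * a) ^ 2 / σ := by
  have hcoreEq : EqOn (fun t => f t ^ 2) (fun t => cos (b * t) ^ 2) (uIcc 0 a) := by
    intro t ht
    rw [uIcc_of_le ha] at ht
    simp only [hf.core t (abs_le.2 ⟨by linarith [ht.1], ht.2⟩)]
  have htailEq := hf.sq_eqOn_Ioi ha
  have h2σ : 0 < 2 * σ := by positivity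
  have hcoreInt : IntervalIntegrable (fun t => f t ^ 2) volume 0 a :=
    ((by fun_prop : Continuous fun t => cos (b * t) ^ 2).intervalIntegrable 0 a).congr
      (hcoreEq.symm.mono uIoc_subset_uIcc)
  have htailInt : IntegrableOn (fun t => f t ^ 2) (Ioi a) :=
    IntegrableOn.congr_fun ((integrableOn_exp_neg_mul_sub_Ioi h2σ a).const_mul _) htailEq.symm
      measurableSet_Ioi
  calc ∫ y, f y ^ 2 = ∫ y, f |y| ^ 2 := by simp_rw [hf.comp_abs]
    _ = 2 * ∫ t in Ioi 0, f t ^ 2 := integral_comp_abs (f := fun t => f t ^ 2)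
    _ = 2 * ((∫ t in (0 : ℝ)..a, f t ^ 2) + ∫ t in Ioi a, f t ^ 2) := by
      rw [intervalIntegral.integral_interval_add_Ioi' hcoreInt htailInt]
    _ = 2 * ((∫ t in (0 : ℝ)..a, cos (b * t) ^ 2) +
          ∫ t in Ioi a, cos (b * a) ^ 2 * exp (-(2 * σ) * (t - a))) := by
      rw [intervalIntegral.integral_congr hcoreEq, setIntegral_congr_fun measurableSet_Ioi htailEq]
    _ = a + sin (2 * b * a) / (2 * b) + cos (b * a) ^ 2 / σ := by
      rw [integral_cos_const_mul_sq hb, integral_const_mul, integral_exp_neg_mul_sub_Ioi h2σ]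
      field_simp
      ring

end IsSlabModeProfile

theorem coupling_coefficient_closed_form_general
    (Wm Ws β0 n1 n0 βmx βmy σm σs βsy : ℝ)
    (hWm : 0 < Wm) (hβmy : βmy ≠ 0)
    (hσm : 0 < σm) (hden : σs ^ 2 + βmy ^ 2 ≠ 0)
    (Em Eu : ℝ → ℝ)
    (hcore : ∀ y : ℝ, |y| ≤ Wm / 2 → Em y = Real.cos (βmy * y))
    (hclad : ∀ y : ℝ, |y| > Wm / 2 →
      Em y = Real.cos (βmy * Wm / 2) * Real.exp (-σm * (|y| - Wm / 2)))
    (hEu : ∀ y : ℝ, Eu y = Real.cos (βsy * Ws / 2) * Real.exp (-σs * (Wm / 2 - y))) :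
    (β0 ^ 2 * (n1 ^ 2 - n0 ^ 2) / (2 * βmx)) *
        (∫ y in (-(Wm / 2))..(Wm / 2), Em y * Eu y) / (∫ y : ℝ, Em y ^ 2) =
      (β0 ^ 2 * (n1 ^ 2 - n0 ^ 2) / (2 * βmx)) * Real.exp (-σs * Wm / 2) *
        Real.cos (βsy * Ws / 2) *
        (2 * σs * Real.cos (βmy * Wm / 2) * Real.sinh (σs * Wm / 2) +
          2 * βmy * Real.sin (βmy * Wm / 2) * Real.cosh (σs * Wm / 2)) /
        ((σs ^ 2 + βmy ^ 2) *
          (Wm / 2 + Real.sin (βmy * Wm) / (2 * βmy) +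
            Real.cos (βmy * Wm / 2) ^ 2 / σm)) := by
  have ha : 0 ≤ Wm / 2 := by positivity
  have hEm : IsSlabModeProfile Em (Wm / 2) βmy σm :=
    ⟨hcore, fun y hy => by rw [hclad y hy, mul_div_assoc]⟩
  have hoverlap : ∫ y in (-(Wm / 2))..(Wm / 2), Em y * Eu y =
      cos (βsy * Ws / 2) * exp (-σs * (Wm / 2)) *
        ∫ y in (-(Wm / 2))..(Wm / 2), cos (βmy * y) * exp (σs * y) := by
    rw [← intervalIntegral.integral_const_mul]
    refine intervalIntegral.integral_congr fun y hy => ?_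
    rw [uIcc_of_le (by linarith)] at hy
    rw [hcore y (abs_le.2 hy), hEu y, show -σs * (Wm / 2 - y) = -σs * (Wm / 2) + σs * y by ring,
      exp_add]
    ring
  rw [hoverlap, integral_cos_mul_exp_symm hden,
    hEm.integral_sq ha hβmy hσm, div_mul_eq_div_div _ (σs ^ 2 + βmy ^ 2)]
  -- `ring_nf` rather than `ring`: the trigonometric arguments `βmy * (Wm / 2)` and
  -- `βmy * Wm / 2` must be normalised as well
  ring_nf

/-- Theorem 1 of the paper (eq. (7)): closed form for the coupling coefficient
between the main waveguide and each symmetrically attached pinching antenna. -/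
theorem coupling_coefficient_closed_form
    (Wm Ws β0 n1 n0 βmx βmy σm σs βsy : ℝ)
    (hWm : 0 < Wm) (hWs : 0 < Ws) (hβmx : βmx ≠ 0) (hβmy : βmy ≠ 0)
    (hσm : 0 < σm) (hden : σs ^ 2 + βmy ^ 2 ≠ 0)
    (Em Eu : ℝ → ℝ)
    (hcore : ∀ y : ℝ, |y| ≤ Wm / 2 → Em y = Real.cos (βmy * y))
    (hclad : ∀ y : ℝ, |y| > Wm / 2 →
      Em y = Real.cos (βmy * Wm / 2) * Real.exp (-σm * (|y| - Wm / 2)))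
    (hEu : ∀ y : ℝ, Eu y = Real.cos (βsy * Ws / 2) * Real.exp (-σs * (Wm / 2 - y))) :
    (β0 ^ 2 * (n1 ^ 2 - n0 ^ 2) / (2 * βmx)) *
        (∫ y in (-(Wm / 2))..(Wm / 2), Em y * Eu y) / (∫ y : ℝ, Em y ^ 2) =
      (β0 ^ 2 * (n1 ^ 2 - n0 ^ 2) / (2 * βmx)) * Real.exp (-σs * Wm / 2) *
        Real.cos (βsy * Ws / 2) *
        (2 * σs * Real.cos (βmy * Wm / 2) * Real.sinh (σs * Wm / 2) +
          2 * βmy * Real.sin (βmy * Wm / 2) * Real.cosh (σs * Wm / 2)) /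
        ((σs ^ 2 + βmy ^ 2) *
          (Wm / 2 + Real.sin (βmy * Wm) / (2 * βmy) +
            Real.cos (βmy * Wm / 2) ^ 2 / σm)) :=
  coupling_coefficient_closed_form_general Wm Ws β0 n1 n0 βmx βmy σm σs βsy hWm hβmy hσm hden Em Eu
    hcore hclad hEu
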